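/- If h is a doubling dimension function with limsup_n N^n h(κ R_n) > 0, then 𝒫^h(C_{s,𝒟}) > 0. -/

import Mathlib

open scoped ENNReal NNReal

/-- The `δ`-packing pre-measure: supremum of `∑ h(2rᵢ)` over countable disjoint families
of open balls with centers in `E` and radii at most `δ` (balls of radius `0` are empty
and serve as padding). -/
noncomputable def packPreδ {X : Type*} [PseudoMetricSpace X] (h : ℝ → ℝ) (E : Set X)
    (δ : ℝ) : ℝ≥0∞ :=
  ⨆ (x : ℕ → X) (r : ℕ → ℝ) (_ : ∀ i, x i ∈ E) (_ : ∀ i, 0 ≤ r i ∧ r i ≤ δ)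
    (_ : Pairwise (Function.onFun Disjoint fun i => Metric.ball (x i) (r i))),
    ∑' i, ENNReal.ofReal (h (2 * r i))

/-- The `h`-packing pre-measure `𝒫^h₀(E) = lim_{δ→0} 𝒫^h_δ(E)`. -/
noncomputable def packPre {X : Type*} [PseudoMetricSpace X] (h : ℝ → ℝ) (E : Set X) : ℝ≥0∞ :=
  ⨅ (δ : ℝ) (_ : 0 < δ), packPreδ h E δ

/-- The `h`-packing measure `𝒫^h(E) = inf {∑ᵢ 𝒫^h₀(Eᵢ) : E ⊆ ⋃ᵢ Eᵢ}`. -/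
noncomputable def packMeasure {X : Type*} [PseudoMetricSpace X] (h : ℝ → ℝ) (E : Set X) : ℝ≥0∞ :=
  ⨅ (c : ℕ → Set X) (_ : E ⊆ ⋃ i, c i), ∑' i, packPre h (c i)

/-!
Push the uniform Bernoulli measure on codings `σ : ℕ → Fin N` forward to a probability measure
`μ` on the Cantor set. By the separation condition, points at distance `< (1 - M) τ R_n` have
codings agreeing up to `n`, so such balls have mass at most `N⁻ⁿ`. Choosing `ε` below the
limsup, at infinitely many scales `N⁻ⁿ < h(κ R_n) / ε`, and doubling turns this into
`μ(B(x, r)) ≲ h(2r)` along radii `r → 0` at every point of the set. Besicovitch's covering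
theorem converts such a density bound into `μ(E) ≤ Λ 𝒫^h(E)`, which is the mass distribution
principle for packing measures.
-/

open MeasureTheory ProbabilityTheory Metric Set Filter Topology PiNat

section Packing

variable {X : Type*} [PseudoMetricSpace X] {h : ℝ → ℝ} {E : Set X} {δ : ℝ}

theorem packPreδ_mono {F : Set X} (hEF : E ⊆ F) : packPreδ h E δ ≤ packPreδ h F δ :=
  iSup₂_mono fun _ _ => iSup_le fun hx => le_iSup_of_le (fun i => hEF (hx i)) le_rfl

theorem packPre_mono {F : Set X} (hEF : E ⊆ F) : packPre h E ≤ packPre h F :=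
  iInf₂_mono fun _ _ => packPreδ_mono hEF

/-- Countable families are re-indexed by `ℕ` through an injection, padding with balls of
radius `0`, which are empty and contribute `h 0 = 0`. -/
theorem tsum_le_packPreδ (h0 : h 0 = 0) {ι : Type*} [Countable ι] {x : ι → X} {r : ι → ℝ}
    (hx : ∀ i, x i ∈ E) (hr : ∀ i, 0 ≤ r i ∧ r i ≤ δ)
    (hdisj : Pairwise (Function.onFun Disjoint fun i => ball (x i) (r i))) :
    ∑' i, ENNReal.ofReal (h (2 * r i)) ≤ packPreδ h E δ := by
  rcases isEmpty_or_nonempty ι with hι | ⟨⟨i₀⟩⟩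
  · simp
  obtain ⟨g, hg⟩ := Countable.exists_injective_nat ι
  set x' := Function.extend g x fun _ => x i₀
  set r' := Function.extend g r 0
  have hx' : ∀ n, x' n ∈ E := fun n => by
    by_cases hn : ∃ i, g i = n
    · obtain ⟨i, rfl⟩ := hn
      simpa [x', hg.extend_apply] using hx i
    · simpa [x', Function.extend_apply' _ _ _ hn] using hx i₀
  have hr' : ∀ n, 0 ≤ r' n ∧ r' n ≤ δ := fun n => by
    by_cases hn : ∃ i, g i = n
    · obtain ⟨i, rfl⟩ := hn
      simpa [r', hg.extend_apply] using hr i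
    · simpa [r', Function.extend_apply' _ _ _ hn] using (hr i₀).1.trans (hr i₀).2
  have hdisj' : Pairwise (Function.onFun Disjoint fun n => ball (x' n) (r' n)) := by
    intro m n hmn
    by_cases hm : ∃ i, g i = m
    · by_cases hn : ∃ j, g j = n
      · obtain ⟨⟨i, rfl⟩, ⟨j, rfl⟩⟩ := And.intro hm hn
        simpa [Function.onFun, x', r', hg.extend_apply] using hdisj (hg.ne_iff.1 hmn)
      · simp [Function.onFun, r', Function.extend_apply' _ _ _ hn]
    · simp [Function.onFun, r', Function.extend_apply' _ _ _ hm]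
  have hsum : ∑' n, ENNReal.ofReal (h (2 * r' n)) = ∑' i, ENNReal.ofReal (h (2 * r i)) := by
    simp_rw [r', Function.apply_extend (fun t => ENNReal.ofReal (h (2 * t)))]
    convert tsum_extend_zero hg _ <;> simp [h0]
  rw [← hsum]
  exact le_iSup_of_le x' <| le_iSup_of_le r' <| le_iSup_of_le hx' <| le_iSup_of_le hr' <|
    le_iSup_of_le hdisj' le_rfl

end Packing

section MassDistribution

variable {α : Type*} [MetricSpace α] [SecondCountableTopology α] [MeasurableSpace α]
  [OpensMeasurableSpace α] [HasBesicovitchCovering α] (μ : Measure α) [SFinite μ]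
  {h : ℝ → ℝ} {E : Set α} {Λ : ℝ≥0∞}

theorem measure_le_mul_packPreδ (h0 : h 0 = 0) {δ : ℝ} (hδ : 0 < δ)
    (hdens : ∀ x ∈ E, ∀ ε > 0, ∃ r ∈ Ioo 0 ε,
      μ (closedBall x r) ≤ Λ * ENNReal.ofReal (h (2 * r))) :
    μ E ≤ Λ * packPreδ h E δ := by
  obtain ⟨t, r, ht, htE, hr, hcov, hdisj⟩ :=
    Besicovitch.exists_disjoint_closedBall_covering_ae μ
    (fun x => {r | μ (closedBall x r) ≤ Λ * ENNReal.ofReal (h (2 * r))}) E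
    (fun x hx ε hε => let ⟨r, hr, hμ⟩ := hdens x hx ε hε; ⟨r, hμ, hr⟩) (fun _ => δ)
    (fun _ _ => hδ)
  have : Countable t := ht.to_subtype
  calc μ E ≤ μ (⋃ x ∈ t, closedBall x (r x)) := measure_mono_ae (ae_le_set.2 hcov)
    _ ≤ ∑' x : t, μ (closedBall x (r x)) := measure_biUnion_le μ ht _
    _ ≤ ∑' x : t, Λ * ENNReal.ofReal (h (2 * r x)) :=
      ENNReal.tsum_le_tsum fun x => (hr x x.2).1
    _ = Λ * ∑' x : t, ENNReal.ofReal (h (2 * r x)) := ENNReal.tsum_mul_left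
    _ ≤ Λ * packPreδ h E δ := by
      gcongr
      exact tsum_le_packPreδ h0 (x := fun x : t => (x : α)) (fun x => htE x.2)
        (fun x => ⟨(hr x x.2).2.1.le, (hr x x.2).2.2.le⟩)
        fun x y hxy => (hdisj x.2 y.2 (Subtype.coe_injective.ne hxy)).mono
          ball_subset_closedBall ball_subset_closedBall

theorem measure_le_mul_packPre (h0 : h 0 = 0) (hΛ0 : Λ ≠ 0) (hΛtop : Λ ≠ ⊤)
    (hdens : ∀ x ∈ E, ∀ ε > 0, ∃ r ∈ Ioo 0 ε,
      μ (closedBall x r) ≤ Λ * ENNReal.ofReal (h (2 * r))) :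
    μ E ≤ Λ * packPre h E := by
  simp_rw [packPre, ENNReal.mul_iInf_of_ne hΛ0 hΛtop]
  exact le_iInf₂ fun δ hδ => measure_le_mul_packPreδ μ h0 hδ hdens

theorem measure_le_mul_packMeasure (h0 : h 0 = 0) (hΛ0 : Λ ≠ 0) (hΛtop : Λ ≠ ⊤)
    (hdens : ∀ x ∈ E, ∀ ε > 0, ∃ r ∈ Ioo 0 ε,
      μ (closedBall x r) ≤ Λ * ENNReal.ofReal (h (2 * r))) :
    μ E ≤ Λ * packMeasure h E := by
  simp_rw [packMeasure, ENNReal.mul_iInf_of_ne hΛ0 hΛtop, ← ENNReal.tsum_mul_left]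
  refine le_iInf₂ fun c hc => ?_
  calc μ E ≤ μ (⋃ i, c i ∩ E) := by
        rw [← iUnion_inter]; exact measure_mono (subset_inter hc le_rfl)
    _ ≤ ∑' i, μ (c i ∩ E) := measure_iUnion_le _
    _ ≤ ∑' i, Λ * packPre h (c i) := ENNReal.tsum_le_tsum fun i =>
      (measure_le_mul_packPre μ h0 hΛ0 hΛtop fun x hx => hdens x hx.2).trans <| by
        gcongr
        exact packPre_mono inter_subset_left

end MassDistribution

section Doubling

variable {h : ℝ → ℝ} {c : ℝ}

theorem doubling_pow_le (hc : 0 ≤ c) (hdbl : ∀ x > 0, h (2 * x) ≤ c * h x) (m : ℕ) {x : ℝ}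
    (hx : 0 < x) : h (2 ^ m * x) ≤ c ^ m * h x := by
  induction m with
  | zero => simp
  | succ m ih =>
    calc h (2 ^ (m + 1) * x) = h (2 * (2 ^ m * x)) := by ring_nf
      _ ≤ c * h (2 ^ m * x) := hdbl _ (by positivity)
      _ ≤ c * (c ^ m * h x) := by gcongr
      _ = c ^ (m + 1) * h x := by ring

theorem Monotone.exists_le_mul_of_doubling (hmono : Monotone h) (hnonneg : ∀ x, 0 ≤ h x)
    (hdbl : ∀ x > 0, h (2 * x) ≤ c * h x) (a : ℝ) {b : ℝ} (hb : 0 < b) :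
    ∃ C, 0 < C ∧ ∀ x > 0, h (a * x) ≤ C * h (b * x) := by
  obtain ⟨m, hm⟩ := pow_unbounded_of_one_lt (a / b) one_lt_two
  have hdbl' : ∀ x > 0, h (2 * x) ≤ max c 1 * h x := fun x hx =>
    (hdbl x hx).trans (by gcongr; exacts [hnonneg x, le_max_left c 1])
  refine ⟨max c 1 ^ m, by positivity, fun x hx => ?_⟩
  calc h (a * x) ≤ h (2 ^ m * (b * x)) := hmono <| by
        rw [← mul_assoc]; gcongr; exact ((div_lt_iff₀ hb).1 hm).le
    _ ≤ max c 1 ^ m * h (b * x) := doubling_pow_le (by positivity) hdbl' m (by positivity)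

end Doubling

/-- The paper's `R_n = ∑_{i > n} sᵢ` is `tailSum s (n + 1)`. -/
noncomputable def tailSum (s : ℕ → ℝ) (n : ℕ) : ℝ := ∑' i, s (i + n)

section TailSum

variable {s : ℕ → ℝ}

theorem tendsto_tailSum (s : ℕ → ℝ) : Tendsto (tailSum s) atTop (𝓝 0) :=
  tendsto_sum_nat_add s

theorem tailSum_eq_add (hs : Summable s) (n : ℕ) : tailSum s n = s n + tailSum s (n + 1) := by
  rw [tailSum, ((summable_nat_add_iff n).2 hs).tsum_eq_zero_add, tailSum]
  simp_rw [zero_add, add_assoc, add_comm 1 n]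

theorem tailSum_pos (hs : ∀ n, 0 < s n) (hsum : Summable s) (n : ℕ) : 0 < tailSum s n :=
  ((summable_nat_add_iff n).2 hsum).tsum_pos (fun _ => (hs _).le) 0 (hs _)

theorem tailSum_antitone (hs : ∀ n, 0 ≤ s n) (hsum : Summable s) : Antitone (tailSum s) :=
  antitone_nat_of_succ_le fun n => by linarith [tailSum_eq_add hsum n, hs n]

end TailSum

structure IsSeparatedDigitSystem {E ι : Type*} [NormedAddCommGroup E] (s : ℕ → ℝ)
    (d : ℕ → ι → E) (κ τ M : ℝ) : Prop where
  pos : ∀ n, 0 < s n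
  summable : Summable s
  bounded : ∃ K, ∀ n a, ‖d n a‖ ≤ K
  norm_sub_le : ∀ n a b, a ≠ b → ‖d n a - d n b‖ ≤ κ
  le_norm_sub : ∀ n a b, a ≠ b → τ ≤ ‖d n a - d n b‖
  τ_pos : 0 < τ
  M_lt_one : M < 1
  separation : ∀ n, κ * tailSum s (n + 1) ≤ M * (τ * s n)

noncomputable def cantorPoint {E ι : Type*} [NormedAddCommGroup E] [NormedSpace ℝ E]
    (s : ℕ → ℝ) (d : ℕ → ι → E) (σ : ℕ → ι) : E :=
  ∑' i, s i • d i (σ i)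

namespace IsSeparatedDigitSystem

variable {E ι : Type*} [NormedAddCommGroup E] [NormedSpace ℝ E]
  {s : ℕ → ℝ} {d : ℕ → ι → E} {κ τ M : ℝ}

theorem exists_norm_smul_le (hD : IsSeparatedDigitSystem s d κ τ M) :
    ∃ K, ∀ n a, ‖s n • d n a‖ ≤ K * s n := by
  obtain ⟨K, hK⟩ := hD.bounded
  refine ⟨K, fun n a => ?_⟩
  rw [norm_smul, Real.norm_of_nonneg (hD.pos n).le, mul_comm]
  exact mul_le_mul_of_nonneg_right (hK n a) (hD.pos n).le

theorem summable_smul [CompleteSpace E] (hD : IsSeparatedDigitSystem s d κ τ M)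
    (σ : ℕ → ι) : Summable fun i => s i • d i (σ i) :=
  let ⟨K, hK⟩ := hD.exists_norm_smul_le
  .of_norm_bounded (hD.summable.mul_left K) fun i => hK i (σ i)

theorem continuous_cantorPoint [CompleteSpace E] [TopologicalSpace ι] [DiscreteTopology ι]
    (hD : IsSeparatedDigitSystem s d κ τ M) : Continuous (cantorPoint s d) :=
  let ⟨K, hK⟩ := hD.exists_norm_smul_le
  continuous_tsum
    (fun i => (continuous_of_discreteTopology (f := fun a => s i • d i a)).comp
      (continuous_apply i))
    (hD.summable.mul_left K) fun i σ => hK i (σ i)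

/-- The `n`-th terms differ by at least `τ sₙ`, all later ones by at most `κ sᵢ`. -/
theorem sub_le_norm_cantorPoint_sub [CompleteSpace E] (hD : IsSeparatedDigitSystem s d κ τ M)
    {σ σ' : ℕ → ι} {n : ℕ} (hσ : σ' ∈ cylinder σ n) (hn : σ' n ≠ σ n) :
    τ * s n - κ * tailSum s (n + 1) ≤ ‖cantorPoint s d σ' - cantorPoint s d σ‖ := by
  set g : ℕ → E := fun i => s i • (d i (σ' i) - d i (σ i))
  have hg : Summable g := by
    simpa only [g, smul_sub] using (hD.summable_smul σ').sub (hD.summable_smul σ)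
  have hτκ : τ ≤ κ := (hD.le_norm_sub n _ _ hn).trans (hD.norm_sub_le n _ _ hn)
  have hgle : ∀ i, ‖g i‖ ≤ κ * s i := fun i => by
    rw [norm_smul, Real.norm_of_nonneg (hD.pos i).le, mul_comm κ]
    refine mul_le_mul_of_nonneg_left ?_ (hD.pos i).le
    rcases eq_or_ne (σ' i) (σ i) with heq | hne
    · simpa [heq] using hD.τ_pos.le.trans hτκ
    · exact hD.norm_sub_le i _ _ hne
  have hgn : τ * s n ≤ ‖g n‖ := by
    rw [norm_smul, Real.norm_of_nonneg (hD.pos n).le, mul_comm τ]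
    exact mul_le_mul_of_nonneg_left (hD.le_norm_sub n _ _ hn) (hD.pos n).le
  have htail : ‖∑' i, g (i + (n + 1))‖ ≤ κ * tailSum s (n + 1) :=
    tsum_of_norm_bounded (((summable_nat_add_iff (n + 1)).2 hD.summable).hasSum.mul_left κ)
      fun i => hgle _
  have hsplit : cantorPoint s d σ' - cantorPoint s d σ = g n + ∑' i, g (i + (n + 1)) := by
    have hsub : cantorPoint s d σ' - cantorPoint s d σ = ∑' i, g i := by
      simp_rw [g, smul_sub]
      exact ((hD.summable_smul σ').tsum_sub (hD.summable_smul σ)).symm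
    rw [hsub, ← hg.sum_add_tsum_nat_add (n + 1), Finset.sum_range_succ,
      Finset.sum_eq_zero fun i hi => by simp [g, hσ i (Finset.mem_range.1 hi)], zero_add]
  rw [hsplit]
  linarith [norm_sub_le_norm_add (g n) (∑' i, g (i + (n + 1)))]

theorem mem_cylinder_of_norm_cantorPoint_sub_lt [CompleteSpace E]
    (hD : IsSeparatedDigitSystem s d κ τ M) {σ σ' : ℕ → ι} {n : ℕ}
    (hlt : ‖cantorPoint s d σ' - cantorPoint s d σ‖ < (1 - M) * τ * tailSum s n) :
    σ' ∈ cylinder σ n := by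
  rcases eq_or_ne σ' σ with rfl | hne
  · exact self_mem_cylinder σ' n
  rw [mem_cylinder_iff_le_firstDiff hne]
  by_contra! hk
  have hdiff := apply_firstDiff_ne hne
  have hsep := hD.sub_le_norm_cantorPoint_sub (mem_cylinder_firstDiff σ' σ) hdiff
  set k := firstDiff σ' σ
  have hτκ : τ ≤ κ := (hD.le_norm_sub k _ _ hdiff).trans (hD.norm_sub_le k _ _ hdiff)
  have hRs : tailSum s (k + 1) ≤ s k := by
    refine le_of_mul_le_mul_left ?_ hD.τ_pos
    calc τ * tailSum s (k + 1) ≤ κ * tailSum s (k + 1) :=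
          mul_le_mul_of_nonneg_right hτκ (tailSum_pos hD.pos hD.summable _).le
      _ ≤ M * (τ * s k) := hD.separation k
      _ ≤ τ * s k := by nlinarith [mul_pos (sub_pos.2 hD.M_lt_one) (mul_pos hD.τ_pos (hD.pos k))]
  have hRn : tailSum s n ≤ tailSum s (k + 1) :=
    tailSum_antitone (fun i => (hD.pos i).le) hD.summable hk
  have hγ : 0 ≤ (1 - M) * τ := (mul_pos (sub_pos.2 hD.M_lt_one) hD.τ_pos).le
  refine hlt.not_ge ?_
  calc (1 - M) * τ * tailSum s n ≤ (1 - M) * τ * s k :=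
        mul_le_mul_of_nonneg_left (hRn.trans hRs) hγ
    _ ≤ τ * s k - κ * tailSum s (k + 1) := by linarith [hD.separation k]
    _ ≤ _ := hsep

end IsSeparatedDigitSystem

theorem infinitePi_uniformOn_cylinder {N : ℕ} [NeZero N] (σ : ℕ → Fin N) (n : ℕ) :
    Measure.infinitePi (fun _ => uniformOn (univ : Set (Fin N))) (cylinder σ n)
      = ((N : ℝ≥0∞) ^ n)⁻¹ := by
  rw [cylinder_eq_pi, Measure.infinitePi_pi _ fun _ _ => measurableSet_singleton _]
  simp [uniformOn_univ, ENNReal.inv_pow]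

noncomputable def cantorMeasure {E : Type*} [NormedAddCommGroup E] [NormedSpace ℝ E]
    [MeasurableSpace E] {N : ℕ} (s : ℕ → ℝ) (d : ℕ → Fin N → E) : Measure E :=
  (Measure.infinitePi fun _ => uniformOn (univ : Set (Fin N))).map (cantorPoint s d)

instance {E : Type*} [NormedAddCommGroup E] [NormedSpace ℝ E] [MeasurableSpace E] {N : ℕ}
    [NeZero N] (s : ℕ → ℝ) (d : ℕ → Fin N → E) : SFinite (cantorMeasure s d) := by
  unfold cantorMeasure; infer_instance

namespace IsSeparatedDigitSystem

variable {E : Type*} [NormedAddCommGroup E] [NormedSpace ℝ E] [CompleteSpace E]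
  [MeasurableSpace E] [BorelSpace E] {N : ℕ} [NeZero N]
  {s : ℕ → ℝ} {d : ℕ → Fin N → E} {κ τ M : ℝ}

theorem cantorMeasure_range (hD : IsSeparatedDigitSystem s d κ τ M) :
    cantorMeasure s d (range (cantorPoint s d)) = 1 := by
  rw [cantorMeasure, Measure.map_apply hD.continuous_cantorPoint.measurable
    (isCompact_range hD.continuous_cantorPoint).isClosed.measurableSet, preimage_range,
    measure_univ]

theorem cantorMeasure_closedBall_le (hD : IsSeparatedDigitSystem s d κ τ M) (σ : ℕ → Fin N)
    {n : ℕ} {ρ : ℝ} (hρ : ρ < (1 - M) * τ * tailSum s n) :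
    cantorMeasure s d (closedBall (cantorPoint s d σ) ρ) ≤ ((N : ℝ≥0∞) ^ n)⁻¹ := by
  rw [cantorMeasure, Measure.map_apply hD.continuous_cantorPoint.measurable
    measurableSet_closedBall, ← infinitePi_uniformOn_cylinder σ n]
  exact measure_mono fun σ' hσ' =>
    hD.mem_cylinder_of_norm_cantorPoint_sub_lt ((mem_closedBall_iff_norm.1 hσ').trans_lt hρ)

/-- Along the scales `rₙ = (1 - M) τ R_n / 2` where `N^n h(κ R_n) > ε`, the ball of radius `rₙ`
has mass at most `N⁻ⁿ < h(κ R_n) / ε`, and doubling compares `h(κ R_n)` with `h(2 rₙ)`. -/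
theorem exists_cantorMeasure_closedBall_le (hD : IsSeparatedDigitSystem s d κ τ M)
    {h : ℝ → ℝ} {C : ℝ} (hC0 : 0 ≤ C) (hC : ∀ x > 0, h (κ * x) ≤ C * h ((1 - M) * τ * x))
    {ε : ℝ≥0∞} (hfreq : ∃ᶠ n in atTop, ε < (N : ℝ≥0∞) ^ n * ENNReal.ofReal (h (κ * tailSum s n)))
    (σ : ℕ → Fin N) {δ : ℝ} (hδ : 0 < δ) :
    ∃ r ∈ Ioo 0 δ, cantorMeasure s d (closedBall (cantorPoint s d σ) r)
      ≤ ε⁻¹ * ENNReal.ofReal C * ENNReal.ofReal (h (2 * r)) := by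
  set γ := (1 - M) * τ
  have hγ : 0 < γ := mul_pos (sub_pos.2 hD.M_lt_one) hD.τ_pos
  have hsmall : ∀ᶠ n in atTop, γ * tailSum s n < δ := by
    simpa using ((tendsto_tailSum s).const_mul γ).eventually_lt_const (by simpa using hδ)
  obtain ⟨n, hn, hnδ⟩ := (hfreq.and_eventually hsmall).exists
  have hR := mul_pos hγ (tailSum_pos hD.pos hD.summable n)
  refine ⟨γ * tailSum s n / 2, ⟨by positivity, by linarith⟩, ?_⟩
  have hN : ((N : ℝ≥0∞) ^ n)⁻¹ ≤ ε⁻¹ * ENNReal.ofReal (h (κ * tailSum s n)) := by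
    have ha : ENNReal.ofReal (h (κ * tailSum s n)) ≠ 0 := fun ha => by simp [ha] at hn
    rw [← ENNReal.div_eq_inv_mul, ENNReal.le_div_iff_mul_le (.inr ha) (.inr ENNReal.ofReal_ne_top),
      ENNReal.inv_mul_le_iff (by simp [NeZero.ne N]) (by simp)]
    exact hn.le
  calc _ ≤ ((N : ℝ≥0∞) ^ n)⁻¹ := hD.cantorMeasure_closedBall_le σ (by linarith)
    _ ≤ ε⁻¹ * ENNReal.ofReal (h (κ * tailSum s n)) := hN
    _ ≤ ε⁻¹ * ENNReal.ofReal (C * h (γ * tailSum s n)) := by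
      gcongr
      exact hC _ (tailSum_pos hD.pos hD.summable n)
    _ = ε⁻¹ * ENNReal.ofReal C * ENNReal.ofReal (h (2 * (γ * tailSum s n / 2))) := by
      rw [ENNReal.ofReal_mul hC0, ← mul_assoc, mul_div_cancel₀ _ two_ne_zero]

end IsSeparatedDigitSystem

/-- If `h` is a doubling dimension function with `limsup_n N^n h(κRₙ) > 0`,
then `𝒫^h(C_{s,𝒟}) > 0`.  Here `Rₙ = ∑_{i ≥ n} sᵢ` is the tail of the series after the
first `n` terms. -/
theorem stmt_9 (p N : ℕ) (hN : 2 ≤ N)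
    (s : ℕ → ℝ) (hs : ∀ n, 0 < s n) (hsum : Summable s)
    (d : ℕ → Fin N → EuclideanSpace ℝ (Fin p))
    (hzero : ∀ n, d n ⟨0, by omega⟩ = 0)
    (κ τ : ℝ) (hτ : 0 < τ)
    (hκ : ∀ (n : ℕ) (i j : Fin N), i ≠ j → ‖d n i - d n j‖ ≤ κ)
    (hτd : ∀ (n : ℕ) (i j : Fin N), i ≠ j → τ ≤ ‖d n i - d n j‖)
    (R : ℕ → ℝ) (hR : ∀ n, R n = ∑' i, s (n + i))
    (M : ℝ) (hM : M < 1) (hsep : ∀ n, κ * R (n + 1) ≤ M * (τ * s n))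
    (h : ℝ → ℝ) (hmono : Monotone h) (h0 : h 0 = 0)
    (hnonneg : ∀ x, 0 ≤ h x)
    (c : ℝ) (hdbl : ∀ x > 0, h (2 * x) ≤ c * h x)
    (hpos : 0 < Filter.atTop.limsup
      (fun n => (N : ℝ≥0∞) ^ n * ENNReal.ofReal (h (κ * R n)))) :
    0 < packMeasure h (Set.range fun σ : ℕ → Fin N => ∑' i, s i • d i (σ i)) := by
  obtain rfl : R = tailSum s := funext fun n => (hR n).trans (by simp_rw [add_comm n]; rfl)
  have hbdd : ∀ n a, ‖d n a‖ ≤ max κ 0 := fun n a => by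
    by_cases ha : a = ⟨0, by omega⟩
    · rw [ha, hzero, norm_zero]
      exact le_max_right κ 0
    · simpa [hzero] using (hκ n a _ ha).trans (le_max_left κ 0)
  have : NeZero N := ⟨by omega⟩
  have hD : IsSeparatedDigitSystem s d κ τ M := ⟨hs, hsum, ⟨_, hbdd⟩, hκ, hτd, hτ, hM, hsep⟩
  obtain ⟨ε, hε0, hεL⟩ := exists_between hpos
  have hfreq := Filter.frequently_lt_of_lt_limsup (by isBoundedDefault) hεL
  obtain ⟨C, hC0, hC⟩ :=
    hmono.exists_le_mul_of_doubling hnonneg hdbl κ (mul_pos (sub_pos.2 hM) hτ)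
  have hmass := measure_le_mul_packMeasure (cantorMeasure s d) h0
    (mul_ne_zero (ENNReal.inv_ne_zero.2 hεL.ne_top) (ENNReal.ofReal_pos.2 hC0).ne')
    (ENNReal.mul_ne_top (ENNReal.inv_ne_top.2 hε0.ne') ENNReal.ofReal_ne_top)
    (E := Set.range (cantorPoint s d)) (by
      rintro _ ⟨σ, rfl⟩ δ hδ
      exact hD.exists_cantorMeasure_closedBall_le hC0.le hC hfreq σ hδ)
  rw [hD.cantorMeasure_range] at hmass
  refine pos_iff_ne_zero.2 fun hP => ?_
  change packMeasure h (Set.range (cantorPoint s d)) = 0 at hP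
  simp [hP] at hmass
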